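/- Let m ≥ 1, let ρ̌ > 0 and ρ̂ > 0 with ρ̂/ρ̌ an integer ≥ 2, and let R(M̌) := B_{ρ̂/2}(M̌) ∩ Δ_ρ̂ for nonempty M̌ ⊆ Δ_ρ̌. Then for every nonempty M̌ ⊆ Δ_ρ̌: (i) B_{ρ̌/2}(M̌) ⊆ B_{ρ̂/2}(R(M̌)), i.e. R(M̌) is a Voronoi cover of M̌ in Δ_ρ̂; and (ii) every nonempty M̂ ⊆ Δ_ρ̂ with B_{ρ̌/2}(M̌) ⊆ B_{ρ̂/2}(M̂) satisfies R(M̌) ⊆ M̂, i.e. R(M̌) is the minimal Voronoi cover. -/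

import Mathlib

noncomputable section

/-- The grid `Δ_ρ = ρℤ^m` in `ℝ^m` (with the maximum norm). -/
def grid (m : ℕ) (ρ : ℝ) : Set (Fin m → ℝ) := {x | ∀ j, ∃ k : ℤ, x j = ρ * k}

/-- `B_δ(A)`: the closed `δ`-neighbourhood of `A` in the maximum norm. -/
def nbhd (m : ℕ) (δ : ℝ) (A : Set (Fin m → ℝ)) : Set (Fin m → ℝ) :=
  {x | Metric.infDist x A ≤ δ}

/-- The restriction operator `R(M̌) = B_{ρ̂/2}(M̌) ∩ Δ_ρ̂`. -/
def Rop (m : ℕ) (rh : ℝ) (M : Set (Fin m → ℝ)) : Set (Fin m → ℝ) :=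
  nbhd m (rh / 2) M ∩ grid m rh

/-- The interpolation operator `I(M̂) = B_{ρ̂/2}(M̂) ∩ Δ_ρ̌`. -/
def Iop (m : ℕ) (rc rh : ℝ) (M : Set (Fin m → ℝ)) : Set (Fin m → ℝ) :=
  nbhd m (rh / 2) M ∩ grid m rc

/-!
Everything happens coordinatewise in the maximum norm, and subsets of a grid are closed, so the
distances in `B_δ(·)` are attained.

(i) If `‖x - c‖ ≤ ρ/2` with `c ∈ M̌`, round each coordinate `c_j = ρ k` to a coarse point
`nρ q` with `|k - n q| ≤ n/2`, breaking the tie (possible only for even `n`) towards the side on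
which `x_j` lies; the resulting `g ∈ Δ_{nρ}` is within `nρ/2` of both `c` and `x`, so `g ∈ R(M̌)`.

(ii) Given `g ∈ R(M̌)` with `‖g - c‖ ≤ nρ/2`, `c ∈ M̌`, the point `x` at `1/n` of the way from `c`
to `g` satisfies `‖x - c‖ ≤ ρ/2` and `‖x - g‖ ≤ nρ/2 - ρ/2`. A cover `M̂` has a point within
`nρ/2` of `x`, hence within `nρ - ρ/2` of `g`; distinct points of `Δ_{nρ}` are `nρ` apart, so it
is `g`.
-/

lemma Int.exists_neg_le_two_mul_sub_mul_lt {n : ℤ} (hn : 0 < n) (k : ℤ) :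
    ∃ q : ℤ, -n ≤ 2 * (k - n * q) ∧ 2 * (k - n * q) < n := by
  have hdiv := Int.mul_ediv_add_emod (2 * k + n) (2 * n)
  have hnonneg := Int.emod_nonneg (2 * k + n) (by omega : 2 * n ≠ 0)
  have hlt := Int.emod_lt_of_pos (2 * k + n) (by omega : 0 < 2 * n)
  exact ⟨(2 * k + n) / (2 * n), by linarith, by linarith⟩

lemma exists_coarse_abs_sub_le_of_le {ρ : ℝ} (hρ : 0 < ρ) {n : ℕ} (hn : 0 < n) (k : ℤ) {t : ℝ}
    (hkt : ρ * k ≤ t) (ht : t - ρ * k ≤ ρ / 2) :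
    ∃ q : ℤ, |ρ * k - n * ρ * q| ≤ n * ρ / 2 ∧ |t - n * ρ * q| ≤ n * ρ / 2 := by
  obtain ⟨q, hlo, hhi⟩ := Int.exists_neg_le_two_mul_sub_mul_lt (Int.natCast_pos.2 hn) k
  have hhi' : 2 * (k - n * q) ≤ (n : ℤ) - 1 := by omega
  have hlo_real : -(n : ℝ) ≤ 2 * (k - n * q) := by exact_mod_cast hlo
  have hhi_real : 2 * ((k : ℝ) - n * q) ≤ n - 1 := by exact_mod_cast hhi'
  have hlo_ρ := mul_le_mul_of_nonneg_left hlo_real hρ.le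
  have hhi_ρ := mul_le_mul_of_nonneg_left hhi_real hρ.le
  refine ⟨q, abs_le.2 ⟨?_, ?_⟩, abs_le.2 ⟨?_, ?_⟩⟩ <;> nlinarith

lemma exists_coarse_abs_sub_le {ρ : ℝ} (hρ : 0 < ρ) {n : ℕ} (hn : 0 < n) (k : ℤ) {t : ℝ}
    (ht : |t - ρ * k| ≤ ρ / 2) :
    ∃ q : ℤ, |ρ * k - n * ρ * q| ≤ n * ρ / 2 ∧ |t - n * ρ * q| ≤ n * ρ / 2 := by
  rcases le_total (ρ * k) t with hkt | htk
  · exact exists_coarse_abs_sub_le_of_le hρ hn k hkt (abs_le.1 ht).2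
  · obtain ⟨q, hk, ht'⟩ := exists_coarse_abs_sub_le_of_le hρ hn (-k) (t := -t)
      (by push_cast; linarith) (by push_cast; linarith [(abs_le.1 ht).1])
    refine ⟨-q, ?_, ?_⟩
    · rw [← abs_neg]; push_cast at hk ⊢; convert hk using 2; ring
    · rw [← abs_neg]; push_cast at ht' ⊢; convert ht' using 2; ring

section Grid

variable {m : ℕ} {ρ : ℝ}

lemma le_dist_of_mem_grid (hρ : 0 < ρ) {x y : Fin m → ℝ} (hx : x ∈ grid m ρ) (hy : y ∈ grid m ρ)
    (hxy : x ≠ y) : ρ ≤ dist x y := by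
  obtain ⟨j, hj⟩ := Function.ne_iff.1 hxy
  obtain ⟨a, ha⟩ := hx j
  obtain ⟨b, hb⟩ := hy j
  have hab : a - b ≠ 0 := sub_ne_zero.2 fun h => hj (by rw [ha, hb, h])
  calc ρ ≤ ρ * |((a - b : ℤ) : ℝ)| := by
        rw [← Int.cast_abs]
        exact le_mul_of_one_le_right hρ.le (by exact_mod_cast Int.one_le_abs hab)
    _ = dist (x j) (y j) := by
        rw [Real.dist_eq, ha, hb, ← mul_sub, abs_mul, abs_of_pos hρ]; push_cast; rfl
    _ ≤ dist x y := dist_le_pi_dist x y j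

lemma isClosed_of_subset_grid (hρ : 0 < ρ) {M : Set (Fin m → ℝ)} (hM : M ⊆ grid m ρ) :
    IsClosed M :=
  Metric.isClosed_of_pairwise_le_dist hρ fun _ hx _ hy hxy =>
    le_dist_of_mem_grid hρ (hM hx) (hM hy) hxy

lemma mem_nbhd_of_dist_le {δ : ℝ} {A : Set (Fin m → ℝ)} {x a : Fin m → ℝ} (ha : a ∈ A)
    (h : dist x a ≤ δ) : x ∈ nbhd m δ A :=
  (Metric.infDist_le_dist_of_mem ha).trans h

/-- Nonemptiness matters: `infDist x ∅ = 0`, so every point lies in `nbhd m δ ∅`. -/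
lemma exists_dist_le_of_mem_nbhd (hρ : 0 < ρ) {δ : ℝ} {M : Set (Fin m → ℝ)} (hM : M ⊆ grid m ρ)
    (hne : M.Nonempty) {x : Fin m → ℝ} (hx : x ∈ nbhd m δ M) : ∃ c ∈ M, dist x c ≤ δ := by
  obtain ⟨c, hc, hdist⟩ := (isClosed_of_subset_grid hρ hM).exists_infDist_eq_dist hne x
  exact ⟨c, hc, hdist ▸ hx⟩

lemma exists_mem_grid_dist_le_half (hρ : 0 < ρ) {n : ℕ} (hn : 0 < n) {c x : Fin m → ℝ}
    (hc : c ∈ grid m ρ) (hx : dist x c ≤ ρ / 2) :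
    ∃ g ∈ grid m (n * ρ), dist c g ≤ n * ρ / 2 ∧ dist x g ≤ n * ρ / 2 := by
  choose k hk using hc
  choose q hcq hxq using fun j => exists_coarse_abs_sub_le hρ hn (k j) (t := x j) (by
    rw [← hk j, ← Real.dist_eq]; exact (dist_le_pi_dist x c j).trans hx)
  have hnρ : 0 ≤ n * ρ / 2 := by positivity
  refine ⟨fun j => n * ρ * q j, fun j => ⟨q j, rfl⟩, ?_, ?_⟩
  · exact (dist_pi_le_iff hnρ).2 fun j => by rw [Real.dist_eq, hk j]; exact hcq j
  · exact (dist_pi_le_iff hnρ).2 fun j => by rw [Real.dist_eq]; exact hxq j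

theorem nbhd_subset_nbhd_Rop (hρ : 0 < ρ) {n : ℕ} (hn : 0 < n) {M : Set (Fin m → ℝ)}
    (hM : M ⊆ grid m ρ) (hne : M.Nonempty) :
    nbhd m (ρ / 2) M ⊆ nbhd m (n * ρ / 2) (Rop m (n * ρ) M) := by
  intro x hx
  obtain ⟨c, hcM, hxc⟩ := exists_dist_le_of_mem_nbhd hρ hM hne hx
  obtain ⟨g, hg, hcg, hxg⟩ := exists_mem_grid_dist_le_half hρ hn (hM hcM) hxc
  exact mem_nbhd_of_dist_le ⟨mem_nbhd_of_dist_le hcM (dist_comm g c ▸ hcg), hg⟩ hxg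

theorem Rop_subset_of_nbhd_subset_nbhd (hρ : 0 < ρ) {n : ℕ} (hn : 0 < n)
    {Mc Mh : Set (Fin m → ℝ)} (hMc : Mc ⊆ grid m ρ) (hne : Mc.Nonempty)
    (hMh : Mh ⊆ grid m (n * ρ)) (hMhne : Mh.Nonempty)
    (hcover : nbhd m (ρ / 2) Mc ⊆ nbhd m (n * ρ / 2) Mh) :
    Rop m (n * ρ) Mc ⊆ Mh := by
  rintro g ⟨hg, hg_grid⟩
  obtain ⟨c, hcMc, hgc⟩ := exists_dist_le_of_mem_nbhd hρ hMc hne hg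
  set x := AffineMap.lineMap c g (n : ℝ)⁻¹
  have hxc : dist x c ≤ ρ / 2 := by
    rw [dist_lineMap_left, dist_comm, Real.norm_of_nonneg (by positivity)]
    calc (n : ℝ)⁻¹ * dist g c ≤ (n : ℝ)⁻¹ * (n * ρ / 2) := by gcongr
      _ = ρ / 2 := by field_simp
  have hxg : dist x g ≤ n * ρ / 2 - ρ / 2 := by
    have hinv : (n : ℝ)⁻¹ ≤ 1 := inv_le_one_of_one_le₀ (by exact_mod_cast hn)
    rw [dist_lineMap_right, dist_comm, Real.norm_of_nonneg (sub_nonneg.2 hinv)]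
    calc (1 - (n : ℝ)⁻¹) * dist g c ≤ (1 - (n : ℝ)⁻¹) * (n * ρ / 2) := by gcongr
      _ = n * ρ / 2 - ρ / 2 := by field_simp
  obtain ⟨y, hyMh, hxy⟩ :=
    exists_dist_le_of_mem_nbhd (by positivity) hMh hMhne (hcover (mem_nbhd_of_dist_le hcMc hxc))
  by_contra hgMh
  have hsep := le_dist_of_mem_grid (by positivity) (hMh hyMh) hg_grid (fun h => hgMh (h ▸ hyMh))
  linarith [dist_triangle y x g, dist_comm x y]

end Grid

theorem stmt14_general (m : ℕ) (rc rh : ℝ) (hrc : 0 < rc)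
    (n : ℕ) (hn : 2 ≤ n) (hq : rh = (n : ℝ) * rc)
    (Mc : Set (Fin m → ℝ)) (hMc : Mc ⊆ grid m rc) (hne : Mc.Nonempty) :
    -- (i) `R(M̌)` is a Voronoi cover of `M̌` in `Δ_ρ̂`
    nbhd m (rc / 2) Mc ⊆ nbhd m (rh / 2) (Rop m rh Mc) ∧
    -- (ii) `R(M̌)` is contained in every Voronoi cover of `M̌` in `Δ_ρ̂`
    (∀ Mh : Set (Fin m → ℝ), Mh ⊆ grid m rh → Mh.Nonempty →
      nbhd m (rc / 2) Mc ⊆ nbhd m (rh / 2) Mh → Rop m rh Mc ⊆ Mh) := by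
  subst hq
  have hn0 : 0 < n := by omega
  exact ⟨nbhd_subset_nbhd_Rop hrc hn0 hMc hne, fun Mh hMh hMhne hcover =>
    Rop_subset_of_nbhd_subset_nbhd hrc hn0 hMc hne hMh hMhne hcover⟩

theorem stmt14 (m : ℕ) (hm : 1 ≤ m) (rc rh : ℝ) (hrc : 0 < rc) (hrh : 0 < rh)
    (n : ℕ) (hn : 2 ≤ n) (hq : rh = (n : ℝ) * rc)
    (Mc : Set (Fin m → ℝ)) (hMc : Mc ⊆ grid m rc) (hne : Mc.Nonempty) :
    -- (i) `R(M̌)` is a Voronoi cover of `M̌` in `Δ_ρ̂`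
    nbhd m (rc / 2) Mc ⊆ nbhd m (rh / 2) (Rop m rh Mc) ∧
    -- (ii) `R(M̌)` is contained in every Voronoi cover of `M̌` in `Δ_ρ̂`
    (∀ Mh : Set (Fin m → ℝ), Mh ⊆ grid m rh → Mh.Nonempty →
      nbhd m (rc / 2) Mc ⊆ nbhd m (rh / 2) Mh → Rop m rh Mc ⊆ Mh) :=
  stmt14_general m rc rh hrc n hn hq Mc hMc hne
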